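/- T is (A,(m,n))-isosymmetric if and only if for every real s and every positive integer k, (e^{isT})*^k I_A^m(T) (e^{isT})^k = Σ_{h=0}^{n−1} ((−isk)^h / h!) Ω_A^{m,h}(T), where I_A^m(T) = Σ_{j=0}^m (-1)^{m−j} binom(m,j) (T*)^j A T^j. -/

import Mathlib

open ContinuousLinearMap NormedSpace Finset

noncomputable def SOp {H : Type*} [NormedAddCommGroup H] [InnerProductSpace ℂ H]
    [CompleteSpace H] (A T : H →L[ℂ] H) (n : ℕ) : H →L[ℂ] H :=
  ∑ k ∈ Finset.range (n + 1),
    ((-1 : ℂ) ^ (n - k) * (n.choose k : ℂ)) • (((adjoint T) ^ k) ∘L A ∘L (T ^ (n - k)))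

noncomputable def OmegaS {H : Type*} [NormedAddCommGroup H] [InnerProductSpace ℂ H]
    [CompleteSpace H] (A T : H →L[ℂ] H) (m n : ℕ) : H →L[ℂ] H :=
  ∑ k ∈ Finset.range (m + 1),
    ((-1 : ℂ) ^ (m - k) * (m.choose k : ℂ)) • (((adjoint T) ^ k) ∘L SOp A T n ∘L (T ^ k))

noncomputable def IOp {H : Type*} [NormedAddCommGroup H] [InnerProductSpace ℂ H]
    [CompleteSpace H] (A T : H →L[ℂ] H) (m : ℕ) : H →L[ℂ] H :=
  ∑ j ∈ Finset.range (m + 1),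
    ((-1 : ℂ) ^ (m - j) * (m.choose j : ℂ)) • (((adjoint T) ^ j) ∘L A ∘L (T ^ j))

/-!
Write `δ x = T* x - x T`. Then `S_A^h(T) = δ^h A`, and since `δ` commutes with
`x ↦ T*^j x T^j`, also `Ω_A^{m,h}(T) = δ^h (I_A^m(T))`. As `δ` is the difference of the commuting
operators of left multiplication by `T*` and right multiplication by `T`,
`(e^{isT})*^k x (e^{isT})^k = e^{-isk δ} x`. So the identity says that the exponential series of
`δ` applied to `I_A^m(T)` stops before degree `n`. This is clear when `δ^n I_A^m(T) = 0`;
conversely, `s ↦ e^{-isδ} I_A^m(T)` is then a polynomial of degree `< n` in the real variable `s`,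
so its `n`-th derivative `(-iδ)^n I_A^m(T)` vanishes.
-/

section GeneralizedDerivation

variable (𝕜 : Type*) {𝔸 : Type*} [NontriviallyNormedField 𝕜] [NormedRing 𝔸] [NormedAlgebra 𝕜 𝔸]

variable (𝔸) in
noncomputable def mulLeftRingHom : 𝔸 →+* (𝔸 →L[𝕜] 𝔸) where
  toFun := mul 𝕜 𝔸
  map_one' := by ext; simp
  map_mul' a b := by ext; simp [mul_assoc]
  map_zero' := by simp
  map_add' := by simp

variable (𝔸) in
noncomputable def mulRightRingHom : 𝔸ᵐᵒᵖ →+* (𝔸 →L[𝕜] 𝔸) where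
  toFun b := (mul 𝕜 𝔸).flip b.unop
  map_one' := by ext; simp
  map_mul' a b := by ext; simp [mul_assoc]
  map_zero' := by ext; simp
  map_add' a b := by ext; simp

@[simp] lemma mulLeftRingHom_apply (a x : 𝔸) : mulLeftRingHom 𝕜 𝔸 a x = a * x := rfl

@[simp] lemma mulRightRingHom_apply (b : 𝔸ᵐᵒᵖ) (x : 𝔸) :
    mulRightRingHom 𝕜 𝔸 b x = x * b.unop := rfl

lemma commute_mulLeftRingHom_mulRightRingHom (a : 𝔸) (b : 𝔸ᵐᵒᵖ) :
    Commute (mulLeftRingHom 𝕜 𝔸 a) (mulRightRingHom 𝕜 𝔸 b) := by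
  ext x; simp [mul_assoc]

noncomputable def genDerivation (a b : 𝔸) : 𝔸 →L[𝕜] 𝔸 :=
  mulLeftRingHom 𝕜 𝔸 a - mulRightRingHom 𝕜 𝔸 (.op b)

variable {𝕜}

@[simp] lemma genDerivation_apply (a b x : 𝔸) : genDerivation 𝕜 a b x = a * x - x * b := rfl

lemma genDerivation_pow_apply (a b x : 𝔸) (h : ℕ) :
    (genDerivation 𝕜 a b ^ h) x = ∑ k ∈ range (h + 1),
      ((-1 : 𝕜) ^ (h - k) * (h.choose k : 𝕜)) • (a ^ k * x * b ^ (h - k)) := by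
  rw [genDerivation, sub_eq_add_neg, ← map_neg, ← MulOpposite.op_neg,
    (commute_mulLeftRingHom_mulRightRingHom 𝕜 a _).add_pow, _root_.sum_apply]
  refine sum_congr rfl fun k _ => ?_
  rw [← map_pow, ← map_pow, mul_apply_eq_comp, mul_apply_eq_comp, _root_.natCast_apply,
    mulRightRingHom_apply, mulLeftRingHom_apply, ← MulOpposite.op_pow, MulOpposite.unop_op,
    ← neg_one_smul 𝕜 b, smul_pow, ← Nat.cast_smul_eq_nsmul 𝕜]
  simp only [smul_mul_assoc, mul_smul_comm, smul_smul, mul_assoc, mul_comm]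

lemma genDerivation_mul_mul {a b c d : 𝔸} (hc : Commute a c) (hd : Commute d b) (x : 𝔸) :
    genDerivation 𝕜 a b (c * x * d) = c * genDerivation 𝕜 a b x * d := by
  simp only [genDerivation_apply, mul_sub, sub_mul, ← mul_assoc, hc.eq]
  simp only [mul_assoc, hd.eq]

lemma genDerivation_pow_mul_mul {a b c d : 𝔸} (hc : Commute a c) (hd : Commute d b) (x : 𝔸)
    (h : ℕ) : (genDerivation 𝕜 a b ^ h) (c * x * d) = c * (genDerivation 𝕜 a b ^ h) x * d := by
  induction h with
  | zero => rfl
  | succ h ih =>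
    rw [pow_succ', mul_apply_eq_comp, ih, genDerivation_mul_mul hc hd, mul_apply_eq_comp]

end GeneralizedDerivation

section Exponential

variable {𝕜 𝔸 : Type*} [RCLike 𝕜] [NormedRing 𝔸] [NormedAlgebra 𝕜 𝔸] [CompleteSpace 𝔸]

lemma exp_smul_genDerivation_apply (z : 𝕜) (a b x : 𝔸) :
    exp (z • genDerivation 𝕜 a b) x = exp (z • a) * x * exp (-(z • b)) := by
  -- the algebraic lemmas about `exp` are stated for `ℚ`-algebras
  let _ : NormedAlgebra ℚ 𝔸 := .restrictScalars ℚ 𝕜 𝔸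
  let _ : NormedAlgebra ℚ (𝔸 →L[𝕜] 𝔸) := .restrictScalars ℚ 𝕜 _
  have hsplit : z • genDerivation 𝕜 a b =
      mulLeftRingHom 𝕜 𝔸 (z • a) + mulRightRingHom 𝕜 𝔸 (.op (-(z • b))) := by
    ext y; simp [genDerivation, sub_eq_add_neg]
  have hL : Continuous (mulLeftRingHom 𝕜 𝔸) := (mul 𝕜 𝔸).continuous
  have hR : Continuous (mulRightRingHom 𝕜 𝔸) :=
    (mul 𝕜 𝔸).flip.continuous.comp MulOpposite.continuous_unop
  rw [hsplit, exp_add_of_commute (commute_mulLeftRingHom_mulRightRingHom 𝕜 _ _),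
    ← map_exp _ hL, ← map_exp _ hR, exp_op, mul_apply_eq_comp, mulLeftRingHom_apply,
    mulRightRingHom_apply, MulOpposite.unop_op, mul_assoc]

lemma exp_smul_pow (z : 𝕜) (x : 𝔸) (k : ℕ) : exp (z • x) ^ k = exp ((z * k) • x) := by
  let _ : NormedAlgebra ℚ 𝔸 := .restrictScalars ℚ 𝕜 𝔸
  rw [← exp_nsmul, ← Nat.cast_smul_eq_nsmul 𝕜, smul_smul, mul_comm]

lemma exp_smul_apply_eq_sum_of_pow_apply_eq_zero {E : Type*} [NormedAddCommGroup E]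
    [NormedSpace 𝕜 E] [CompleteSpace E] (M : E →L[𝕜] E) {x : E} {n : ℕ}
    (hx : (M ^ n) x = 0) (z : 𝕜) :
    exp (z • M) x = ∑ h ∈ range n, (z ^ h / h.factorial) • (M ^ h) x := by
  have hseries : HasSum (fun h : ℕ => (z ^ h / h.factorial) • (M ^ h) x) (exp (z • M) x) := by
    convert (apply 𝕜 E x).hasSum (exp_series_hasSum_exp' (𝕂 := 𝕜) (z • M)) using 1
    · ext h
      simp [smul_pow, smul_smul, div_eq_inv_mul]
    · rfl
  refine hseries.unique (hasSum_sum_of_ne_finset_zero fun h hh => ?_)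
  obtain ⟨j, rfl⟩ := Nat.exists_eq_add_of_le (not_lt.mp (mem_range.not.mp hh))
  rw [add_comm, pow_add M, mul_apply_eq_comp, hx, map_zero, smul_zero]

end Exponential

section Polynomial

variable {𝕜 E : Type*} [NormedAddCommGroup E]

lemma hasDerivAt_sum_range_pow_smul [NontriviallyNormedField 𝕜] [NormedSpace 𝕜 E] (c : ℕ → E)
    (n : ℕ) (s : 𝕜) :
    HasDerivAt (fun t : 𝕜 => ∑ i ∈ range (n + 1), t ^ i • c i)
      (∑ i ∈ range n, s ^ i • ((i + 1 : 𝕜) • c (i + 1))) s := by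
  convert HasDerivAt.fun_sum fun i (_ : i ∈ range (n + 1)) =>
    (hasDerivAt_pow i s).smul_const (c i) using 1
  rw [sum_range_succ']
  simp [smul_smul, mul_comm]

lemma apply_pow_eq_zero_of_apply_exp_smul_eq_sum {𝔸 : Type*} [RCLike 𝕜] [NormedRing 𝔸]
    [NormedAlgebra 𝕜 𝔸] [CompleteSpace 𝔸] [NormedSpace 𝕜 E] (a : 𝔸) (φ : 𝔸 →L[𝕜] E) {n : ℕ}
    {c : ℕ → E} (h : ∀ s : 𝕜, φ (exp (s • a)) = ∑ i ∈ range n, s ^ i • c i) :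
    φ (a ^ n) = 0 := by
  induction n generalizing φ c with
  | zero => simpa using h 0
  | succ n ih =>
    have hderiv (s : 𝕜) :
        φ (exp (s • a) * a) = ∑ i ∈ range n, s ^ i • ((i + 1 : 𝕜) • c (i + 1)) := by
      have hφ : HasDerivAt (fun t : 𝕜 => φ (exp (t • a))) (φ (exp (s • a) * a)) s :=
        φ.hasFDerivAt.comp_hasDerivAt s (hasDerivAt_exp_smul_const a s)
      rw [funext h] at hφ
      exact hφ.unique (hasDerivAt_sum_range_pow_smul c n s)
    simpa [pow_succ] using ih (φ ∘L (mul 𝕜 𝔸).flip a) hderiv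

lemma pow_apply_eq_zero_of_exp_real_smul_apply_eq_sum [NormedSpace ℂ E] [CompleteSpace E]
    (M : E →L[ℂ] E) {x : E} {w : ℂ} (hw : w ≠ 0) {n : ℕ} {c : ℕ → E}
    (h : ∀ s : ℝ, exp ((w * s) • M) x = ∑ i ∈ range n, (w * s) ^ i • c i) :
    (M ^ n) x = 0 := by
  have hreal (s : ℝ) :
      (apply ℂ E x).restrictScalars ℝ (exp (s • w • M)) = ∑ i ∈ range n, s ^ i • w ^ i • c i := by
    rw [coe_restrictScalars', apply_apply, ← algebraMap_smul ℂ s, Complex.coe_algebraMap,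
      smul_smul, mul_comm, h]
    refine sum_congr rfl fun i _ => ?_
    rw [← algebraMap_smul ℂ (s ^ i), Complex.coe_algebraMap, smul_smul, mul_pow,
      Complex.ofReal_pow, mul_comm]
  have hzero := apply_pow_eq_zero_of_apply_exp_smul_eq_sum _ _ hreal
  rw [coe_restrictScalars', apply_apply, smul_pow, smul_apply, smul_eq_zero] at hzero
  exact hzero.resolve_left (pow_ne_zero n hw)

end Polynomial

section Isosymmetric

variable {H : Type*} [NormedAddCommGroup H] [InnerProductSpace ℂ H] [CompleteSpace H]

lemma SOp_eq_genDerivation_pow_apply (A T : H →L[ℂ] H) (h : ℕ) :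
    SOp A T h = (genDerivation ℂ (adjoint T) T ^ h) A := by
  rw [genDerivation_pow_apply, SOp]
  rfl

lemma OmegaS_eq_genDerivation_pow_apply (A T : H →L[ℂ] H) (m h : ℕ) :
    OmegaS A T m h = (genDerivation ℂ (adjoint T) T ^ h) (IOp A T m) := by
  rw [IOp, map_sum, OmegaS]
  refine sum_congr rfl fun j _ => ?_
  simp only [map_smul, ← ContinuousLinearMap.mul_def, ← mul_assoc]
  rw [genDerivation_pow_mul_mul ((Commute.refl _).pow_right j) ((Commute.refl T).pow_left j),
    SOp_eq_genDerivation_pow_apply]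

lemma adjoint_exp (X : H →L[ℂ] H) : adjoint (exp X) = exp (adjoint X) := by
  rw [← star_eq_adjoint, ← star_eq_adjoint, star_exp]

lemma adjoint_exp_pow_comp_comp_exp_pow (T B : H →L[ℂ] H) (s : ℝ) (k : ℕ) :
    (adjoint (exp ((Complex.I * s) • T)) ^ k) ∘L B ∘L (exp ((Complex.I * s) • T) ^ k) =
      exp ((-Complex.I * s * k) • genDerivation ℂ (adjoint T) T) B := by
  have hconj : star (Complex.I * s) = -Complex.I * s := by simp [Complex.conj_ofReal]
  rw [exp_smul_genDerivation_apply, adjoint_exp, ← star_eq_adjoint, star_smul, hconj,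
    star_eq_adjoint, exp_smul_pow, exp_smul_pow, ← neg_smul, neg_mul, neg_mul, neg_neg]
  rfl

end Isosymmetric

theorem isosymmetric_iff_exp_expansion_general {H : Type*} [NormedAddCommGroup H]
    [InnerProductSpace ℂ H] [CompleteSpace H] (A T : H →L[ℂ] H)
    (m n : ℕ) :
    OmegaS A T m n = 0 ↔
      ∀ (s : ℝ) (k : ℕ), 1 ≤ k →
        ((adjoint (NormedSpace.exp ((Complex.I * (s : ℂ)) • T))) ^ k) ∘L IOp A T m ∘L
            ((NormedSpace.exp ((Complex.I * (s : ℂ)) • T)) ^ k) =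
          ∑ h ∈ Finset.range n,
            (((-Complex.I * (s : ℂ) * (k : ℂ)) ^ h / (h.factorial : ℂ))) • OmegaS A T m h := by
  simp only [OmegaS_eq_genDerivation_pow_apply, adjoint_exp_pow_comp_comp_exp_pow]
  set δ := genDerivation ℂ (adjoint T) T
  constructor
  · intro hzero s k _
    exact exp_smul_apply_eq_sum_of_pow_apply_eq_zero δ hzero _
  · intro hexp
    refine pow_apply_eq_zero_of_exp_real_smul_apply_eq_sum δ (neg_ne_zero.mpr Complex.I_ne_zero)
      (c := fun h => (h.factorial : ℂ)⁻¹ • (δ ^ h) (IOp A T m)) fun s => ?_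
    simpa [smul_smul, div_eq_mul_inv] using hexp s 1 le_rfl

theorem isosymmetric_iff_exp_expansion {H : Type*} [NormedAddCommGroup H]
    [InnerProductSpace ℂ H] [CompleteSpace H] (A T : H →L[ℂ] H) (hA : A.IsPositive)
    (m n : ℕ) (hn : 1 ≤ n) :
    OmegaS A T m n = 0 ↔
      ∀ (s : ℝ) (k : ℕ), 1 ≤ k →
        ((adjoint (NormedSpace.exp ((Complex.I * (s : ℂ)) • T))) ^ k) ∘L IOp A T m ∘L
            ((NormedSpace.exp ((Complex.I * (s : ℂ)) • T)) ^ k) =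
          ∑ h ∈ Finset.range n,
            (((-Complex.I * (s : ℂ) * (k : ℂ)) ^ h / (h.factorial : ℂ))) • OmegaS A T m h :=
  isosymmetric_iff_exp_expansion_general A T m n
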